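/- Let n be a natural number and let X, Y, Z be nonzero n×n complex matrices. Then sin Θ(X,Y) ≤ sin Θ(X,Z) + sin Θ(Z,Y). -/

import Mathlib

/-!
Flattening a matrix into `EuclideanSpace ℂ (Fin n × Fin n)`, regarded as a real inner product
space, turns `Re Tr(YᴴX)` into the real inner product, so `Θ` becomes the Euclidean angle and the
claim is the sine triangle inequality for angles. For unit vectors `x, y, z` put
`a = ⟪x, z⟫`, `b = ⟪x, y⟫`, `c = ⟪y, z⟫`; Cauchy–Schwarz for the components of `x` and `z`
orthogonal to `y` gives `(a - bc)² ≤ (1 - b²)(1 - c²)`, which forces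
`√(1 - a²) ≤ √(1 - b²) + √(1 - c²)`.
-/

open Matrix
open scoped ComplexOrder

/-- Hilbert–Schmidt (Frobenius) norm: ‖X‖₂ = √(Re Tr(XᴴX)). -/
noncomputable def hsNorm {n : ℕ} (X : Matrix (Fin n) (Fin n) ℂ) : ℝ :=
  Real.sqrt ((Matrix.trace (Xᴴ * X)).re)

/-- Angle Θ(X,Y) = arccos(Re Tr(YᴴX) / (‖X‖₂‖Y‖₂)). -/
noncomputable def theta {n : ℕ} (X Y : Matrix (Fin n) (Fin n) ℂ) : ℝ :=
  Real.arccos ((Matrix.trace (Yᴴ * X)).re / (hsNorm X * hsNorm Y))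

/-- |X| : the positive semidefinite square root of XᴴX. -/
noncomputable def matAbs {n : ℕ} (X : Matrix (Fin n) (Fin n) ℂ) : Matrix (Fin n) (Fin n) ℂ :=
  ((Matrix.posSemidef_conjTranspose_mul_self X).1.eigenvectorUnitary : Matrix (Fin n) (Fin n) ℂ) *
    diagonal ((↑) ∘ (√·) ∘ (Matrix.posSemidef_conjTranspose_mul_self X).1.eigenvalues) *
    (star (Matrix.posSemidef_conjTranspose_mul_self X).1.eigenvectorUnitary : Matrix (Fin n) (Fin n) ℂ)

open InnerProductGeometry NormedSpace
open scoped RealInnerProductSpace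

lemma sqrt_one_sub_sq_le_add_of_sq_sub_mul_le {a b c : ℝ} (hb : b ^ 2 ≤ 1) (hc : c ^ 2 ≤ 1)
    (h : (a - b * c) ^ 2 ≤ (1 - b ^ 2) * (1 - c ^ 2)) :
    √(1 - a ^ 2) ≤ √(1 - b ^ 2) + √(1 - c ^ 2) := by
  have hb' : 0 ≤ 1 - b ^ 2 := by linarith
  have hc' : 0 ≤ 1 - c ^ 2 := by linarith
  set s := √(1 - b ^ 2) * √(1 - c ^ 2)
  have hs : 0 ≤ s := by positivity
  have hs2 : s ^ 2 = (1 - b ^ 2) * (1 - c ^ 2) := by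
    rw [mul_pow, Real.sq_sqrt hb', Real.sq_sqrt hc']
  have hbc : |b * c| ≤ 1 := by
    rw [← sq_le_one_iff_abs_le_one]; nlinarith
  have ht : |a - b * c| ≤ s := by
    rw [← abs_of_nonneg hs]; exact sq_le_sq.1 (hs2 ▸ h)
  have hcross : |b * c * (a - b * c)| ≤ s := by
    rw [abs_mul]; exact (mul_le_of_le_one_left (abs_nonneg _) hbc).trans ht
  apply Real.sqrt_le_iff.2 ⟨by positivity, ?_⟩
  rw [add_sq, Real.sq_sqrt hb', Real.sq_sqrt hc']
  nlinarith [abs_le.1 hcross]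

section InnerProductSpace
variable {V : Type*} [NormedAddCommGroup V] [InnerProductSpace ℝ V]

lemma sq_inner_sub_inner_mul_inner_le {x y z : V} (hx : ‖x‖ = 1) (hy : ‖y‖ = 1) (hz : ‖z‖ = 1) :
    (⟪x, z⟫ - ⟪x, y⟫ * ⟪y, z⟫) ^ 2 ≤ (1 - ⟪x, y⟫ ^ 2) * (1 - ⟪y, z⟫ ^ 2) := by
  have hxx : ⟪x, x⟫ = 1 := by rw [real_inner_self_eq_norm_sq, hx, one_pow]
  have hyy : ⟪y, y⟫ = 1 := by rw [real_inner_self_eq_norm_sq, hy, one_pow]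
  have hzz : ⟪z, z⟫ = 1 := by rw [real_inner_self_eq_norm_sq, hz, one_pow]
  have cs := real_inner_mul_inner_self_le (x - ⟪x, y⟫ • y) (z - ⟪y, z⟫ • y)
  simp only [inner_sub_left, inner_sub_right, real_inner_smul_left, real_inner_smul_right,
    hxx, hyy, hzz, real_inner_comm x y, real_inner_comm y z] at cs
  nlinarith [cs]

lemma sin_angle_of_norm_eq_one {x y : V} (hx : ‖x‖ = 1) (hy : ‖y‖ = 1) :
    Real.sin (angle x y) = √(1 - ⟪x, y⟫ ^ 2) := by
  rw [angle, hx, hy, mul_one, div_one, Real.sin_arccos]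

lemma sin_angle_le_sin_angle_add_sin_angle_of_norm_eq_one {x y z : V}
    (hx : ‖x‖ = 1) (hy : ‖y‖ = 1) (hz : ‖z‖ = 1) :
    Real.sin (angle x z) ≤ Real.sin (angle x y) + Real.sin (angle y z) := by
  have hcs {u v : V} (hu : ‖u‖ = 1) (hv : ‖v‖ = 1) : ⟪u, v⟫ ^ 2 ≤ 1 :=
    (sq_le_one_iff_abs_le_one _).2 (by simpa [hu, hv] using abs_real_inner_le_norm u v)
  rw [sin_angle_of_norm_eq_one hx hz, sin_angle_of_norm_eq_one hx hy,
    sin_angle_of_norm_eq_one hy hz]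
  exact sqrt_one_sub_sq_le_add_of_sq_sub_mul_le (hcs hx hy) (hcs hy hz)
    (sq_inner_sub_inner_mul_inner_le hx hy hz)

theorem sin_angle_le_sin_angle_add_sin_angle (x y z : V) :
    Real.sin (angle x z) ≤ Real.sin (angle x y) + Real.sin (angle y z) := by
  rcases eq_or_ne x 0 with rfl | hx
  · simp [sin_angle_nonneg]
  rcases eq_or_ne y 0 with rfl | hy
  · rw [angle_zero_left, angle_zero_right, Real.sin_pi_div_two]
    linarith [Real.sin_le_one (angle x z)]
  rcases eq_or_ne z 0 with rfl | hz
  · simp [sin_angle_nonneg]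
  have key := sin_angle_le_sin_angle_add_sin_angle_of_norm_eq_one
    (norm_normalize_eq_one_iff.2 hx) (norm_normalize_eq_one_iff.2 hy)
    (norm_normalize_eq_one_iff.2 hz)
  simpa only [angle_normalize_left, angle_normalize_right] using key

end InnerProductSpace

lemma Matrix.real_inner_toLp_vec {m n : Type*} [Fintype m] [Fintype n] (X Y : Matrix m n ℂ) :
    ⟪(WithLp.toLp 2 X.vec : EuclideanSpace ℂ (n × m)), WithLp.toLp 2 Y.vec⟫ =
      (trace (Xᴴ * Y)).re := by
  rw [← star_vec_dotProduct_vec, dotProduct, Complex.re_sum, PiLp.inner_apply]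
  simp [mul_comm]

lemma hsNorm_eq_norm_toLp_vec {n : ℕ} (X : Matrix (Fin n) (Fin n) ℂ) :
    hsNorm X = ‖(WithLp.toLp 2 X.vec : EuclideanSpace ℂ (Fin n × Fin n))‖ := by
  rw [norm_eq_sqrt_real_inner, Matrix.real_inner_toLp_vec, hsNorm]

lemma theta_eq_angle {n : ℕ} (X Y : Matrix (Fin n) (Fin n) ℂ) :
    theta X Y =
      angle (WithLp.toLp 2 X.vec : EuclideanSpace ℂ (Fin n × Fin n)) (WithLp.toLp 2 Y.vec) := by
  rw [theta, angle, real_inner_comm, Matrix.real_inner_toLp_vec, hsNorm_eq_norm_toLp_vec,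
    hsNorm_eq_norm_toLp_vec]

theorem stmt_4_general {n : ℕ} (X Y Z : Matrix (Fin n) (Fin n) ℂ) :
    Real.sin (theta X Y) ≤ Real.sin (theta X Z) + Real.sin (theta Z Y) := by
  simp only [theta_eq_angle]
  exact sin_angle_le_sin_angle_add_sin_angle _ _ _

theorem stmt_4 {n : ℕ} (X Y Z : Matrix (Fin n) (Fin n) ℂ)
    (hX : X ≠ 0) (hY : Y ≠ 0) (hZ : Z ≠ 0) :
    Real.sin (theta X Y) ≤ Real.sin (theta X Z) + Real.sin (theta Z Y) :=
  stmt_4_general X Y Z
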